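/- Let X = [a,b] ⊂ ℝ with K > |a| > 0, and for x¹,…,xʳ ∈ Xⁿ define F(x¹,…,xʳ) = ∏_{i=1}^{n} (min{x¹ᵢ,…,xʳᵢ} + K)/(max{x¹ᵢ,…,xʳᵢ} + K). Then F satisfies the triangle-type inequality F(x¹,x²,…,xʳ) ≥ F(x¹,h,…,h) · F(h,x²,…,xʳ) for every h ∈ Xⁿ. -/

import Mathlib

/-- The Morillas-type stationary fuzzy measure on `r`-tuples of points of `ℝⁿ`:
`F(x¹,…,xʳ) = ∏_{i=1}^{n} (min_j xʲᵢ + K)/(max_j xʲᵢ + K)`. -/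
noncomputable def morillasF (K : ℝ) (n r : ℕ) (hr : 0 < r)
    (y : Fin r → Fin n → ℝ) : ℝ :=
  ∏ i : Fin n,
    ((Finset.univ.inf' ⟨⟨0, hr⟩, Finset.mem_univ _⟩ fun j => y j i) + K) /
    ((Finset.univ.sup' ⟨⟨0, hr⟩, Finset.mem_univ _⟩ fun j => y j i) + K)

/-!
Each factor of `F` is the ratio `min / max` of the positive numbers `xʲᵢ + K`, i.e. `exp (-ℓ)`
where `ℓ` is the length of their range on a logarithmic scale. The tuples `(x¹, h, …, h)` and
`(h, x², …, xʳ)` have overlapping ranges (both contain `hᵢ + K`) whose union contains the range of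
`(x¹, …, xʳ)`, so the triangle inequality for lengths of overlapping intervals gives the claim
factor by factor.
-/

open Finset

theorem Finset.inf'_le_sup' {ι β : Type*} [Lattice β] {s : Finset ι} (hs : s.Nonempty)
    (f : ι → β) : s.inf' hs f ≤ s.sup' hs f :=
  (inf'_le f hs.choose_spec).trans (le_sup' f hs.choose_spec)

section MinMaxRatio

variable {α ι κ₁ κ₂ : Type*} [Field α] [LinearOrder α] [IsStrictOrderedRing α]
  [Fintype ι] [Fintype κ₁] [Fintype κ₂]

theorem div_mul_div_le_min_div_max {m₁ M₁ m₂ M₂ : α} (hm₁ : 0 < m₁) (hm₂ : 0 < m₂)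
    (h₁ : m₁ ≤ M₁) (h₂ : m₂ ≤ M₂) (h₁₂ : m₁ ≤ M₂) (h₂₁ : m₂ ≤ M₁) :
    m₁ / M₁ * (m₂ / M₂) ≤ min m₁ m₂ / max M₁ M₂ := by
  have one₁ : m₁ / M₁ ≤ 1 := div_le_one_of_le₀ h₁ (hm₁.trans_le h₁).le
  have one₂ : m₂ / M₂ ≤ 1 := div_le_one_of_le₀ h₂ (hm₂.trans_le h₂).le
  have one₁₂ : m₁ / M₂ ≤ 1 := div_le_one_of_le₀ h₁₂ (hm₁.trans_le h₁₂).le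
  have one₂₁ : m₂ / M₁ ≤ 1 := div_le_one_of_le₀ h₂₁ (hm₂.trans_le h₂₁).le
  have ratio_nonneg : ∀ {m M : α}, 0 < m → m ≤ M → 0 ≤ m / M := fun hm hM =>
    div_nonneg hm.le (hm.trans_le hM).le
  -- In each case the product regroups as `min / max` times one of the ratios above; the two
  -- mixed cases are where the overlap `m₁ ≤ M₂`, `m₂ ≤ M₁` enters.
  rw [div_mul_div_comm]
  rcases min_cases m₁ m₂ with ⟨hmin, -⟩ | ⟨hmin, -⟩ <;>
    rcases max_cases M₁ M₂ with ⟨hmax, -⟩ | ⟨hmax, -⟩ <;> rw [hmin, hmax]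
  · rw [← div_mul_div_comm]; exact mul_le_of_le_one_right (ratio_nonneg hm₁ h₁) one₂
  · rw [mul_comm M₁, ← div_mul_div_comm]
    exact mul_le_of_le_one_right (ratio_nonneg hm₁ h₁₂) one₂₁
  · rw [mul_comm m₁, ← div_mul_div_comm]
    exact mul_le_of_le_one_right (ratio_nonneg hm₂ h₂₁) one₁₂
  · rw [mul_comm m₁, mul_comm M₁, ← div_mul_div_comm]
    exact mul_le_of_le_one_right (ratio_nonneg hm₂ h₂) one₁

def minMaxRatio (hι : (univ : Finset ι).Nonempty) (f : ι → α) : α :=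
  univ.inf' hι f / univ.sup' hι f

theorem minMaxRatio_nonneg (hι : (univ : Finset ι).Nonempty) {f : ι → α} (hf : ∀ i, 0 ≤ f i) :
    0 ≤ minMaxRatio hι f := by
  have hinf : 0 ≤ univ.inf' hι f := (le_inf'_iff hι f).2 fun i _ => hf i
  exact div_nonneg hinf (hinf.trans (inf'_le_sup' hι f))

theorem minMaxRatio_mul_le (hι : (univ : Finset ι).Nonempty) (h₁ : (univ : Finset κ₁).Nonempty)
    (h₂ : (univ : Finset κ₂).Nonempty) {f : ι → α} {f₁ : κ₁ → α} {f₂ : κ₂ → α}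
    (pos₁ : ∀ k, 0 < f₁ k) (pos₂ : ∀ k, 0 < f₂ k)
    (hcover : Set.range f ⊆ Set.range f₁ ∪ Set.range f₂)
    (hoverlap : (Set.range f₁ ∩ Set.range f₂).Nonempty) :
    minMaxRatio h₁ f₁ * minMaxRatio h₂ f₂ ≤ minMaxRatio hι f := by
  obtain ⟨k₁, -, hk₁⟩ := exists_mem_eq_inf' h₁ f₁
  obtain ⟨k₂, -, hk₂⟩ := exists_mem_eq_inf' h₂ f₂
  obtain ⟨_, ⟨l₁, hl₁⟩, ⟨l₂, rfl⟩⟩ := hoverlap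
  have hmin : min (univ.inf' h₁ f₁) (univ.inf' h₂ f₂) ≤ univ.inf' hι f :=
    (le_inf'_iff hι f).2 fun i _ => by
      rcases hcover ⟨i, rfl⟩ with ⟨k, hk⟩ | ⟨k, hk⟩ <;> rw [← hk]
      exacts [min_le_of_left_le (inf'_le f₁ (mem_univ k)),
        min_le_of_right_le (inf'_le f₂ (mem_univ k))]
  have hmax : univ.sup' hι f ≤ max (univ.sup' h₁ f₁) (univ.sup' h₂ f₂) :=
    (sup'_le_iff hι f).2 fun i _ => by
      rcases hcover ⟨i, rfl⟩ with ⟨k, hk⟩ | ⟨k, hk⟩ <;> rw [← hk]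
      exacts [le_max_of_le_left (le_sup' f₁ (mem_univ k)),
        le_max_of_le_right (le_sup' f₂ (mem_univ k))]
  have hmin_pos : 0 < min (univ.inf' h₁ f₁) (univ.inf' h₂ f₂) := by
    rw [hk₁, hk₂]; exact lt_min (pos₁ k₁) (pos₂ k₂)
  calc minMaxRatio h₁ f₁ * minMaxRatio h₂ f₂
      ≤ min (univ.inf' h₁ f₁) (univ.inf' h₂ f₂) / max (univ.sup' h₁ f₁) (univ.sup' h₂ f₂) :=
        div_mul_div_le_min_div_max (hk₁ ▸ pos₁ k₁) (hk₂ ▸ pos₂ k₂)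
          (inf'_le_sup' ..) (inf'_le_sup' ..)
          ((inf'_le f₁ (mem_univ l₁)).trans (hl₁ ▸ le_sup' f₂ (mem_univ l₂)))
          ((inf'_le f₂ (mem_univ l₂)).trans (hl₁ ▸ le_sup' f₁ (mem_univ l₁)))
    _ ≤ minMaxRatio hι f :=
        div_le_div₀ (hmin_pos.le.trans hmin) hmin
          (hmin_pos.trans_le (hmin.trans (inf'_le_sup' ..))) hmax

end MinMaxRatio

theorem morillasF_eq_prod_minMaxRatio (K : ℝ) (n r : ℕ) (hr : 0 < r) (y : Fin r → Fin n → ℝ) :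
    morillasF K n r hr y =
      ∏ i, minMaxRatio ⟨⟨0, hr⟩, mem_univ _⟩ fun j => y j i + K := by
  unfold morillasF minMaxRatio
  congr! 2
  exacts [map_finset_inf' (OrderIso.addRight K) _ _, map_finset_sup' (OrderIso.addRight K) _ _]

/-- for `X = [a,b]` with `K > |a| > 0`, the function
`F(x¹,…,xʳ) = ∏ᵢ (min + K)/(max + K)` satisfies the triangle-type inequality
`F(x¹,x²,…,xʳ) ≥ F(x¹,h,…,h) · F(h,x²,…,xʳ)` for every `h ∈ Xⁿ`. -/
theorem stmt5 (a b K : ℝ) (haK : |a| < K) (n r : ℕ) (hr : 3 ≤ r)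
    (x : Fin r → Fin n → ℝ) (h : Fin n → ℝ)
    (hx : ∀ j i, x j i ∈ Set.Icc a b) (hh : ∀ i, h i ∈ Set.Icc a b) :
    morillasF K n r (by omega) (fun j => if j.val = 0 then x ⟨0, by omega⟩ else h)
      * morillasF K n r (by omega) (Function.update x ⟨0, by omega⟩ h)
      ≤ morillasF K n r (by omega) x := by
  have hK : ∀ {t : ℝ}, t ∈ Set.Icc a b → 0 < t + K := fun ht => by
    linarith [ht.1, neg_abs_le a]
  have pos₁ : ∀ (j : Fin r) i, 0 < (if j.val = 0 then x ⟨0, by omega⟩ else h) i + K := by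
    intro j i; split_ifs <;> exact hK (by simp [hx, hh])
  have pos₂ : ∀ j i, 0 < Function.update x ⟨0, by omega⟩ h j i + K := by
    intro j i; rcases eq_or_ne j ⟨0, by omega⟩ with rfl | hj
    exacts [by simpa using hK (hh i), by simpa [hj] using hK (hx j i)]
  simp only [morillasF_eq_prod_minMaxRatio, ← prod_mul_distrib]
  refine prod_le_prod (fun i _ => mul_nonneg (minMaxRatio_nonneg _ fun j => (pos₁ j i).le)
    (minMaxRatio_nonneg _ fun j => (pos₂ j i).le)) fun i _ =>
    minMaxRatio_mul_le _ _ _ (fun j => pos₁ j i) (fun j => pos₂ j i) ?_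
      ⟨h i + K, ⟨⟨1, by omega⟩, by simp⟩, ⟨⟨0, by omega⟩, by simp⟩⟩
  rintro _ ⟨j, rfl⟩
  rcases eq_or_ne j ⟨0, by omega⟩ with rfl | hj
  exacts [.inl ⟨⟨0, by omega⟩, by simp⟩, .inr ⟨j, by simp [hj]⟩]
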